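/- arXiv:1703.06242 — 2 statements merged into one kernel-verified Lean document; each statement's English description precedes it below -/
import Mathlib

section
/- Let d ≥ 1, 0 < λ ≤ Λ, C₀ > c₀ > 0, L > R > 0, and let ν ∈ ℝ^d be a unit vector. Suppose w is upper semicontinuous on the closure of Q_L and is a viscosity subsolution of ∂_t w − P⁺(D²w) = 0 in Q_L, that w(x,t) ≤ c₀ for all (x,t) ∈ ∂P_ν ∩ closure(Q_L), and that w(x,t) ≤ C₀ on closure(Q_L). Then there exists a constant C depending only on λ, Λ, d and C₀ such that w(x,t) ≤ c₀ + C·R/L for all (x,t) ∈ Q_R. -/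
open Set Filter Topology
open scoped Classical

noncomputable section

abbrev Mat (d : ℕ) := Matrix (Fin d) (Fin d) ℝ
abbrev Spc (d : ℕ) := EuclideanSpace ℝ (Fin d)

/-- Euclidean dot product. -/
def dotR {d : ℕ} (x y : Spc d) : ℝ := ∑ i, x i * y i

/-- The vector in `ℝ^d` with integer coordinates `k`. -/
def intVec {d : ℕ} (k : Fin d → ℤ) : Spc d :=
  (WithLp.equiv 2 (Fin d → ℝ)).symm fun i => (k i : ℝ)

/-- A direction is rational if it is a real multiple of a nonzero integer vector. -/
def IsRatDir {d : ℕ} (ν : Spc d) : Prop :=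
  ∃ k : Fin d → ℤ, intVec k ≠ 0 ∧ ∃ c : ℝ, ν = c • intVec k

/-- Pucci maximal operator `P⁺(M) = Σ_{e>0} Λ e + Σ_{e<0} λ e` over the eigenvalues of `M`. -/
noncomputable def pucciPlus (lam Lam : ℝ) {d : ℕ} (M : Mat d) : ℝ :=
  if hM : M.IsHermitian then
    ∑ i, (Lam * max (hM.eigenvalues i) 0 + lam * min (hM.eigenvalues i) 0)
  else 0

noncomputable def timeDeriv {d : ℕ} (φ : Spc d × ℝ → ℝ) (p : Spc d × ℝ) : ℝ :=
  deriv (fun s => φ (p.1, s)) p.2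

noncomputable def spaceGrad {d : ℕ} (φ : Spc d × ℝ → ℝ) (p : Spc d × ℝ) : Spc d :=
  (WithLp.equiv 2 (Fin d → ℝ)).symm fun i =>
    fderiv ℝ (fun y => φ (y, p.2)) p.1 (EuclideanSpace.single i 1)

noncomputable def spaceHess {d : ℕ} (φ : Spc d × ℝ → ℝ) (p : Spc d × ℝ) : Mat d :=
  Matrix.of fun i j =>
    fderiv ℝ (fun y => (fderiv ℝ (fun z => φ (z, p.2)) y) (EuclideanSpace.single j 1))
      p.1 (EuclideanSpace.single i 1)

/-- Viscosity subsolution of `∂ₜ u - H(D²u, Du, (x,t)) = 0` on `O`. -/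
def ViscSubsol {d : ℕ} (O : Set (Spc d × ℝ)) (u : Spc d × ℝ → ℝ)
    (H : Mat d → Spc d → Spc d × ℝ → ℝ) : Prop :=
  ∀ φ : Spc d × ℝ → ℝ, ∀ p ∈ O, ContDiffAt ℝ 2 φ p →
    IsLocalMaxOn (fun q => u q - φ q) O p →
    timeDeriv φ p - H (spaceHess φ p) (spaceGrad φ p) p ≤ 0

/-- Viscosity supersolution of `∂ₜ u - H(D²u, Du, (x,t)) = 0` on `O`. -/
def ViscSupersol {d : ℕ} (O : Set (Spc d × ℝ)) (u : Spc d × ℝ → ℝ)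
    (H : Mat d → Spc d → Spc d × ℝ → ℝ) : Prop :=
  ∀ φ : Spc d × ℝ → ℝ, ∀ p ∈ O, ContDiffAt ℝ 2 φ p →
    IsLocalMinOn (fun q => u q - φ q) O p →
    0 ≤ timeDeriv φ p - H (spaceHess φ p) (spaceGrad φ p) p

/-- The half space `P_ν = {(x,t) : x·ν ≥ 0}`. -/
def Pnu {d : ℕ} (ν : Spc d) : Set (Spc d × ℝ) := {p | 0 ≤ dotR p.1 ν}
def bdryPnu {d : ℕ} (ν : Spc d) : Set (Spc d × ℝ) := {p | dotR p.1 ν = 0}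
def intPnu {d : ℕ} (ν : Spc d) : Set (Spc d × ℝ) := {p | 0 < dotR p.1 ν}

/-- The box `Q_L = {0 < x_ν < L, |x'| < L, |t| < L²}`. -/
def QL {d : ℕ} (ν : Spc d) (L : ℝ) : Set (Spc d × ℝ) :=
  {p | 0 < dotR p.1 ν ∧ dotR p.1 ν < L ∧ ‖p.1 - dotR p.1 ν • ν‖ < L ∧ |p.2| < L ^ 2}

def UnifElliptic {d : ℕ} {α : Type*} (lam Lam : ℝ) (F : Mat d → α → ℝ) : Prop :=
  ∀ M N : Mat d, M.IsSymm → N.PosSemidef → ∀ a : α,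
    lam * N.trace ≤ F (M + N) a - F M a ∧ F (M + N) a - F M a ≤ Lam * N.trace

/-- Bounded viscosity solution of a Dirichlet problem on `O` with boundary part `bd`. -/
def IsBddViscSolOn {d : ℕ} (O bd : Set (Spc d × ℝ)) (u : Spc d × ℝ → ℝ)
    (H : Mat d → Spc d → Spc d × ℝ → ℝ) (gbd : Spc d × ℝ → ℝ) : Prop :=
  ContinuousOn u (O ∪ bd) ∧ (∃ K : ℝ, ∀ p ∈ O ∪ bd, |u p| ≤ K) ∧
  ViscSubsol O u H ∧ ViscSupersol O u H ∧ ∀ p ∈ bd, u p = gbd p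

/-- `ℤ^d × ℤ` space-time periodicity. -/
def SpaceTimePeriodic {d : ℕ} (ρ : Spc d × ℝ → ℝ) : Prop :=
  ∀ (p : Spc d × ℝ) (k : Fin d → ℤ) (m : ℤ), ρ (p.1 + intVec k, p.2 + m) = ρ p

end

/-!
Comparison with an explicit barrier. With `σ = x_ν / L`, `τ = t / L²` and `B = (Λ d + 1) / λ`, put
`φ = c₀ + C₀ (τ² + |x'|² / L² + σ + B σ (1 - σ))`.
Then `φ ≥ c₀` on `closure Q_L` and `φ ≥ c₀ + C₀` on the faces of `Q_L` other than `x_ν = 0`, so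
`w ≤ φ` there. The Hessian of `φ` has the eigenvalue `2 C₀ / L²` on `ν^⊥` and `-2 C₀ B / L²` along
`ν`, whence `P⁺(D²φ) ≤ -2 C₀ / L² < ∂ₜφ`: `φ` is a strict classical supersolution, so `w - φ` cannot
attain its maximum over the compact set `closure Q_L` inside `Q_L`. Hence `w ≤ φ` everywhere, and on
`Q_R` one has `φ ≤ c₀ + C₀ (B + 3) R / L`.
-/

open scoped RealInnerProductSpace

section Pucci

open Matrix

lemma Matrix.isHermitian_smul_vecMulVec_add {d : ℕ} (ν : Fin d → ℝ) (a b : ℝ) :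
    (a • vecMulVec ν ν + b • (1 : Mat d)).IsHermitian := by
  ext i j
  simp [vecMulVec, one_apply, eq_comm, mul_comm]

lemma Matrix.IsHermitian.eigenvalues_smul_vecMulVec_add {d : ℕ} {ν : Fin d → ℝ} (hν : ν ⬝ᵥ ν = 1)
    {a b : ℝ} (hM : (a • vecMulVec ν ν + b • (1 : Mat d)).IsHermitian) (i : Fin d) :
    hM.eigenvalues i = b ∨ hM.eigenvalues i = a + b := by
  set v : Fin d → ℝ := ⇑(hM.eigenvectorBasis i)
  have hv : v ≠ 0 := fun h =>
    hM.eigenvectorBasis.orthonormal.ne_zero i (by ext j; exact congrFun h j)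
  have heig : a • (ν ⬝ᵥ v) • ν + b • v = hM.eigenvalues i • v := by
    rw [← hM.mulVec_eigenvectorBasis i, add_mulVec, smul_mulVec, smul_mulVec, one_mulVec,
      vecMulVec_mulVec, op_smul_eq_smul]
  by_cases hc : ν ⬝ᵥ v = 0
  · left
    rw [hc, zero_smul, smul_zero, zero_add] at heig
    exact (smul_left_injective ℝ hv heig).symm
  · right
    have := congrArg (ν ⬝ᵥ ·) heig
    simp only [dotProduct_add, dotProduct_smul, hν, smul_eq_mul] at this
    exact (mul_right_cancel₀ hc (by linarith)).symm

lemma pucciPlus_smul_vecMulVec_add_le {d : ℕ} {lam Lam : ℝ} (hlam : 0 ≤ lam) (hLam : 0 ≤ Lam)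
    {ν : Fin d → ℝ} (hν : ν ⬝ᵥ ν = 1) {a b : ℝ} (hb : 0 ≤ b) (hab : a + b < 0) :
    pucciPlus lam Lam (a • vecMulVec ν ν + b • (1 : Mat d))
      ≤ ((d : ℝ) - 1) * (Lam * b) + lam * (a + b) := by
  have hM := isHermitian_smul_vecMulVec_add ν a b
  have heig := hM.eigenvalues_smul_vecMulVec_add hν
  -- the trace `a + d b` forces the eigenvalue `a + b` to occur
  obtain ⟨i₀, hi₀⟩ : ∃ i₀, hM.eigenvalues i₀ = a + b := by
    by_contra! h
    have htr := hM.trace_eq_sum_eigenvalues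
    simp only [fun i => (heig i).resolve_right (h i), trace_add, trace_smul, trace_vecMulVec, hν,
      trace_one, Fintype.card_fin, RCLike.ofReal_real_eq_id, id, Finset.sum_const,
      Finset.card_univ, nsmul_eq_mul, smul_eq_mul] at htr
    linarith
  have hle : ∀ i, Lam * max (hM.eigenvalues i) 0 + lam * min (hM.eigenvalues i) 0 ≤ Lam * b := by
    intro i
    rcases heig i with h | h <;> rw [h]
    · simp [max_eq_left hb, min_eq_right hb]
    · rw [max_eq_right hab.le, min_eq_left hab.le]; nlinarith
  rw [pucciPlus, dif_pos hM, ← Finset.sum_erase_add _ _ (Finset.mem_univ i₀), hi₀,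
    max_eq_right hab.le, min_eq_left hab.le]
  have hd : 1 ≤ d := Fin.pos i₀
  calc _ ≤ ((Finset.univ.erase i₀).card • (Lam * b)) + (Lam * 0 + lam * (a + b)) :=
        add_le_add_left (Finset.sum_le_card_nsmul _ _ _ fun i _ => hle i) _
    _ = _ := by
      rw [Finset.card_erase_of_mem (Finset.mem_univ _), Finset.card_univ, Fintype.card_fin,
        nsmul_eq_mul, Nat.cast_sub hd]
      ring

end Pucci

section Quadratic

variable {E : Type*} [NormedAddCommGroup E] [InnerProductSpace ℝ E]

lemma fderiv_quadratic_apply (ν : E) (A₀ A₁ A₂ A₃ : ℝ) (y v : E) :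
    fderiv ℝ (fun z => A₀ + A₁ * ⟪ν, z⟫ + A₂ * ⟪ν, z⟫ ^ 2 + A₃ * ‖z‖ ^ 2) y v
      = A₁ * ⟪ν, v⟫ + 2 * A₂ * ⟪ν, y⟫ * ⟪ν, v⟫ + 2 * A₃ * ⟪y, v⟫ := by
  have hν : HasFDerivAt (fun z => ⟪ν, z⟫) (innerSL ℝ ν) y := (innerSL ℝ ν).hasFDerivAt
  have h := (((hν.const_mul A₁).const_add A₀).add ((hν.pow 2).const_mul A₂)).add
    ((hasFDerivAt_id y).norm_sq.const_mul A₃)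
  refine (congrArg (· v) h.fderiv).trans ?_
  simp only [Nat.add_one_sub_one, pow_one, nsmul_eq_mul, Nat.cast_ofNat, id_eq,
    ContinuousLinearMap.comp_id, add_apply, smul_apply, coe_innerSL_apply, smul_eq_mul]
  ring

lemma fderiv_fderiv_quadratic_apply (ν : E) (A₀ A₁ A₂ A₃ : ℝ) (x u v : E) :
    fderiv ℝ (fun y => fderiv ℝ
        (fun z => A₀ + A₁ * ⟪ν, z⟫ + A₂ * ⟪ν, z⟫ ^ 2 + A₃ * ‖z‖ ^ 2) y v) x u
      = 2 * A₂ * ⟪ν, u⟫ * ⟪ν, v⟫ + 2 * A₃ * ⟪u, v⟫ := by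
  simp_rw [fderiv_quadratic_apply]
  have hν : HasFDerivAt (fun y => ⟪ν, y⟫) (innerSL ℝ ν) x := (innerSL ℝ ν).hasFDerivAt
  have hv : HasFDerivAt (fun y => ⟪y, v⟫) ((innerSL ℝ v)) x := by
    simpa [real_inner_comm] using (innerSL ℝ v).hasFDerivAt (x := x)
  have h := (((hν.const_mul (2 * A₂)).mul_const ⟪ν, v⟫).const_add (A₁ * ⟪ν, v⟫)).add
    (hv.const_mul (2 * A₃))
  refine (congrArg (· u) h.fderiv).trans ?_
  simp only [add_apply, smul_apply, coe_innerSL_apply, smul_eq_mul, real_inner_comm]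
  ring

end Quadratic

theorem ViscSubsol.le_of_strictSupersolution {d : ℕ} {O : Set (Spc d × ℝ)}
    {w φ : Spc d × ℝ → ℝ} {H : Mat d → Spc d → Spc d × ℝ → ℝ}
    (hO : IsCompact (closure O)) (hw : UpperSemicontinuousOn w (closure O))
    (hsub : ViscSubsol O w H) (hφ : ContDiff ℝ 2 φ)
    (hsuper : ∀ p ∈ O, 0 < timeDeriv φ p - H (spaceHess φ p) (spaceGrad φ p) p)
    (hbd : ∀ p ∈ closure O \ O, w p ≤ φ p) :
    ∀ p ∈ closure O, w p ≤ φ p := by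
  by_contra! ⟨q, hq, hwq⟩
  have husc : UpperSemicontinuousOn (fun p => w p - φ p) (closure O) := by
    have hφ' : UpperSemicontinuousOn (fun p => -φ p) (closure O) :=
      hφ.continuous.neg.continuousOn.upperSemicontinuousOn
    simpa only [sub_eq_add_neg] using hw.add hφ'
  obtain ⟨p, hp, hmax⟩ := husc.exists_isMaxOn ⟨q, hq⟩ hO
  have hpos : 0 < w p - φ p := (sub_pos.2 hwq).trans_le (hmax hq)
  have hpO : p ∈ O := by
    by_contra hpO
    linarith [hbd p ⟨hp, hpO⟩]
  have hloc : IsLocalMaxOn (fun p => w p - φ p) O p :=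
    (hmax.on_subset subset_closure).localize
  linarith [hsub φ p hpO hφ.contDiffAt hloc, hsuper p hpO]

section Box

variable {d : ℕ} {ν : Spc d} {L : ℝ}

lemma dotR_eq_inner (x ν : Spc d) : dotR x ν = ⟪ν, x⟫ := by
  simp [dotR, PiLp.inner_apply]

lemma norm_sub_inner_smul_sq {E : Type*} [NormedAddCommGroup E] [InnerProductSpace ℝ E]
    {ν : E} (hν : ‖ν‖ = 1) (x : E) : ‖x - ⟪ν, x⟫ • ν‖ ^ 2 = ‖x‖ ^ 2 - ⟪ν, x⟫ ^ 2 := by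
  rw [norm_sub_sq_real, norm_smul, hν, real_inner_smul_right, real_inner_comm, Real.norm_eq_abs,
    mul_one, sq_abs]
  ring

lemma QL_mono {R : ℝ} (hRL : R ≤ L) (hR : 0 ≤ R) : QL ν R ⊆ QL ν L := fun _ ⟨h₁, h₂, h₃, h₄⟩ =>
  ⟨h₁, h₂.trans_le hRL, h₃.trans_le hRL, h₄.trans_le (by gcongr)⟩

lemma continuous_dotR_fst : Continuous fun p : Spc d × ℝ => dotR p.1 ν := by
  simp only [dotR_eq_inner]
  fun_prop

lemma closure_QL_subset : closure (QL ν L) ⊆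
    {p | 0 ≤ dotR p.1 ν ∧ dotR p.1 ν ≤ L ∧ ‖p.1 - dotR p.1 ν • ν‖ ≤ L ∧ |p.2| ≤ L ^ 2} := by
  refine closure_minimal (fun p ⟨h₁, h₂, h₃, h₄⟩ => ⟨h₁.le, h₂.le, h₃.le, h₄.le⟩) ?_
  have h := continuous_dotR_fst (ν := ν)
  exact (isClosed_le continuous_const h).inter <| (isClosed_le h continuous_const).inter <|
    (isClosed_le (continuous_fst.sub (h.smul continuous_const)).norm continuous_const).inter
      (isClosed_le continuous_snd.abs continuous_const)

lemma isCompact_closure_QL : IsCompact (closure (QL ν L)) := by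
  refine Metric.isCompact_of_isClosed_isBounded isClosed_closure (Bornology.IsBounded.closure ?_)
  refine (Metric.isBounded_closedBall (x := 0) (r := L + L * ‖ν‖)).prod
    (Metric.isBounded_closedBall (x := 0) (r := L ^ 2)) |>.subset fun p ⟨h₁, h₂, h₃, h₄⟩ => ?_
  simp only [Set.mem_prod, Metric.mem_closedBall, dist_zero_right, Real.norm_eq_abs]
  refine ⟨?_, h₄.le⟩
  calc ‖p.1‖ ≤ ‖p.1 - dotR p.1 ν • ν‖ + ‖dotR p.1 ν • ν‖ := norm_le_norm_sub_add _ _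
    _ ≤ L + L * ‖ν‖ := by
      rw [norm_smul, Real.norm_of_nonneg h₁.le]
      gcongr

end Box

section Barrier

variable {d : ℕ} (c₀ C₀ B L : ℝ) (ν : Spc d)

noncomputable def barrier (p : Spc d × ℝ) : ℝ :=
  c₀ + C₀ * ((p.2 / L ^ 2) ^ 2 + ‖p.1‖ ^ 2 / L ^ 2 + (B + 1) * (⟪ν, p.1⟫ / L)
    - (B + 1) * (⟪ν, p.1⟫ / L) ^ 2)

lemma contDiff_barrier : ContDiff ℝ 2 (barrier c₀ C₀ B L ν) := by
  have hnorm : ContDiff ℝ 2 fun p : Spc d × ℝ => ‖p.1‖ ^ 2 := contDiff_fst.norm_sq ℝ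
  have hinner : ContDiff ℝ 2 fun p : Spc d × ℝ => ⟪ν, p.1⟫ :=
    (innerSL ℝ ν).contDiff.comp contDiff_fst
  exact contDiff_const.add <| contDiff_const.mul <|
    ((((contDiff_snd.div_const _).pow 2).add (hnorm.div_const _)).add
      (contDiff_const.mul (hinner.div_const _))).sub
      (contDiff_const.mul ((hinner.div_const _).pow 2))

lemma timeDeriv_barrier (p : Spc d × ℝ) :
    timeDeriv (barrier c₀ C₀ B L ν) p = 2 * C₀ * p.2 / L ^ 4 := by
  have h := (((((hasDerivAt_id' p.2).div_const (L ^ 2)).fun_pow 2).add_const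
    (‖p.1‖ ^ 2 / L ^ 2)).add_const ((B + 1) * (⟪ν, p.1⟫ / L))).sub_const
    ((B + 1) * (⟪ν, p.1⟫ / L) ^ 2) |>.const_mul C₀ |>.const_add c₀
  refine h.deriv.trans ?_
  ring

lemma spaceHess_barrier (p : Spc d × ℝ) :
    spaceHess (barrier c₀ C₀ B L ν) p
      = (-(2 * C₀ * (B + 1) / L ^ 2)) • Matrix.vecMulVec ⇑ν ⇑ν + (2 * C₀ / L ^ 2) • 1 := by
  have hquad : (fun x => barrier c₀ C₀ B L ν (x, p.2)) = fun x =>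
      (c₀ + C₀ * (p.2 / L ^ 2) ^ 2) + C₀ * (B + 1) / L * ⟪ν, x⟫
        + (-(C₀ * (B + 1) / L ^ 2)) * ⟪ν, x⟫ ^ 2 + C₀ / L ^ 2 * ‖x‖ ^ 2 := by
    funext x
    simp only [barrier]
    ring
  ext i j
  simp only [spaceHess, Matrix.of_apply, hquad, fderiv_fderiv_quadratic_apply]
  simp only [EuclideanSpace.inner_single_right, PiLp.single_apply, Real.ringHom_apply,
    MonoidWithZeroHom.map_ite_one_zero, Matrix.vecMulVec, Matrix.add_apply, Matrix.smul_apply,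
    Matrix.of_apply, Matrix.one_apply, smul_eq_mul, eq_comm]
  split_ifs <;> ring

variable {c₀ C₀ B L ν}

lemma barrier_eq_of_norm_eq_one (hν : ‖ν‖ = 1) (p : Spc d × ℝ) :
    barrier c₀ C₀ B L ν p = c₀ + C₀ * ((p.2 / L ^ 2) ^ 2 + ‖p.1 - dotR p.1 ν • ν‖ ^ 2 / L ^ 2
      + dotR p.1 ν / L + B * (dotR p.1 ν / L) * (1 - dotR p.1 ν / L)) := by
  rw [barrier, dotR_eq_inner, norm_sub_inner_smul_sq hν]
  ring

lemma timeDeriv_sub_pucciPlus_barrier_pos {lam Lam : ℝ} (hlam : 0 < lam) (hLam : 0 ≤ Lam)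
    (hν : ‖ν‖ = 1) (hC₀ : 0 < C₀) (hB : 0 < B) (hBlam : Lam * (d - 1) + 1 ≤ lam * B)
    (hL : 0 < L) {p : Spc d × ℝ} (ht : -L ^ 2 < p.2) :
    0 < timeDeriv (barrier c₀ C₀ B L ν) p
      - pucciPlus lam Lam (spaceHess (barrier c₀ C₀ B L ν) p) := by
  have hνν : ⇑ν ⬝ᵥ ⇑ν = 1 := by
    simpa [dotR, dotProduct, hν] using dotR_eq_inner ν ν
  set k := 2 * C₀ / L ^ 2 with hk
  have hkpos : 0 < k := by positivity
  have hsum : -(2 * C₀ * (B + 1) / L ^ 2) + k = -(k * B) := by rw [hk]; ring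
  have hP := pucciPlus_smul_vecMulVec_add_le hlam.le hLam hνν hkpos.le
    (hsum ▸ neg_neg_of_pos (mul_pos hkpos hB))
  rw [hsum] at hP
  have hP' : pucciPlus lam Lam (spaceHess (barrier c₀ C₀ B L ν) p) ≤ -k := by
    rw [spaceHess_barrier]
    linarith [mul_le_mul_of_nonneg_left hBlam hkpos.le]
  have htime : timeDeriv (barrier c₀ C₀ B L ν) p = k * (p.2 / L ^ 2) := by
    rw [timeDeriv_barrier, hk]
    field_simp
  have ht' : -1 < p.2 / L ^ 2 := by
    rw [lt_div_iff₀ (by positivity)]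
    linarith
  rw [htime]
  linarith [mul_pos hkpos (show 0 < p.2 / L ^ 2 + 1 by linarith)]

lemma barrier_le_of_mem_QL (hν : ‖ν‖ = 1) (hC₀ : 0 ≤ C₀) (hB : 0 ≤ B) {R : ℝ} (hR : 0 < R)
    (hRL : R ≤ L) {p : Spc d × ℝ} (hp : p ∈ QL ν R) :
    barrier c₀ C₀ B L ν p ≤ c₀ + C₀ * (B + 3) * R / L := by
  obtain ⟨hs₀, hsR, hxR, htR⟩ := hp
  have hL : 0 < L := hR.trans_le hRL
  have hr₀ : 0 ≤ R / L := by positivity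
  have hr₁ : R / L ≤ 1 := div_le_one_of_le₀ hRL hL.le
  have hr₂ : (R / L) ^ 2 ≤ R / L := pow_le_of_le_one hr₀ hr₁ two_ne_zero
  have hσ₀ : 0 ≤ dotR p.1 ν / L := by positivity
  have hσ : dotR p.1 ν / L ≤ R / L := by gcongr
  have hη : ‖p.1 - dotR p.1 ν • ν‖ ^ 2 / L ^ 2 ≤ R / L := by
    rw [← div_pow]
    calc _ ≤ (R / L) ^ 2 := by gcongr
      _ ≤ R / L := hr₂
  have hτ : (p.2 / L ^ 2) ^ 2 ≤ R / L := by
    have : |p.2 / L ^ 2| ≤ (R / L) ^ 2 := by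
      rw [abs_div, abs_of_pos (by positivity : (0 : ℝ) < L ^ 2), div_pow]
      gcongr
    calc _ = |p.2 / L ^ 2| ^ 2 := (sq_abs _).symm
      _ ≤ ((R / L) ^ 2) ^ 2 := by gcongr
      _ ≤ R / L := by nlinarith
  have hquad : B * (dotR p.1 ν / L) * (1 - dotR p.1 ν / L) ≤ B * (R / L) := by
    nlinarith [mul_nonneg hB (mul_nonneg hσ₀ hσ₀), mul_le_mul_of_nonneg_left hσ hB]
  rw [barrier_eq_of_norm_eq_one hν, show C₀ * (B + 3) * R / L = C₀ * ((B + 3) * (R / L)) by ring]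
  gcongr
  linarith

lemma le_barrier_of_mem_closure_QL (hν : ‖ν‖ = 1) (hC₀ : 0 ≤ C₀) (hB : 0 ≤ B) (hL : 0 < L)
    {p : Spc d × ℝ} (hp : p ∈ closure (QL ν L)) :
    c₀ + C₀ * ((p.2 / L ^ 2) ^ 2 + ‖p.1 - dotR p.1 ν • ν‖ ^ 2 / L ^ 2 + dotR p.1 ν / L)
      ≤ barrier c₀ C₀ B L ν p := by
  obtain ⟨hs₀, hsL, -, -⟩ := closure_QL_subset hp
  have hσ₁ : dotR p.1 ν / L ≤ 1 := div_le_one_of_le₀ hsL hL.le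
  have : 0 ≤ B * (dotR p.1 ν / L) * (1 - dotR p.1 ν / L) :=
    mul_nonneg (mul_nonneg hB (div_nonneg hs₀ hL.le)) (sub_nonneg.2 hσ₁)
  rw [barrier_eq_of_norm_eq_one hν, mul_add C₀ _ (B * _ * _)]
  linarith [mul_nonneg hC₀ this]

lemma self_le_barrier_of_mem_closure_QL (hν : ‖ν‖ = 1) (hC₀ : 0 ≤ C₀) (hB : 0 ≤ B) (hL : 0 < L)
    {p : Spc d × ℝ} (hp : p ∈ closure (QL ν L)) : c₀ ≤ barrier c₀ C₀ B L ν p := by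
  refine le_trans ?_ (le_barrier_of_mem_closure_QL hν hC₀ hB hL hp)
  have : 0 ≤ dotR p.1 ν / L := div_nonneg (closure_QL_subset hp).1 hL.le
  exact le_add_of_nonneg_right (mul_nonneg hC₀ (by positivity))

lemma add_le_barrier_of_mem_closure_QL_diff (hν : ‖ν‖ = 1) (hC₀ : 0 ≤ C₀) (hB : 0 ≤ B)
    (hL : 0 < L) {p : Spc d × ℝ} (hp : p ∈ closure (QL ν L) \ QL ν L) (hs : dotR p.1 ν ≠ 0) :
    c₀ + C₀ ≤ barrier c₀ C₀ B L ν p := by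
  refine le_trans ?_ (le_barrier_of_mem_closure_QL hν hC₀ hB hL hp.1)
  obtain ⟨hs₀, hsL, hxL, htL⟩ := closure_QL_subset hp.1
  have hface : dotR p.1 ν = L ∨ ‖p.1 - dotR p.1 ν • ν‖ = L ∨ |p.2| = L ^ 2 := by
    by_contra! h
    exact hp.2 ⟨hs₀.lt_of_ne' hs, hsL.lt_of_ne h.1, hxL.lt_of_ne h.2.1, htL.lt_of_ne h.2.2⟩
  have hσ : 0 ≤ dotR p.1 ν / L := div_nonneg hs₀ hL.le
  have hL₂ : L ^ 2 ≠ 0 := by positivity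
  have : 1 ≤ (p.2 / L ^ 2) ^ 2 + ‖p.1 - dotR p.1 ν • ν‖ ^ 2 / L ^ 2 + dotR p.1 ν / L := by
    rcases hface with h | h | h
    · rw [h, div_self hL.ne']
      exact le_add_of_nonneg_left (by positivity)
    · rw [h, div_self hL₂]
      linarith [sq_nonneg (p.2 / L ^ 2)]
    · rw [← sq_abs, abs_div, h, abs_of_pos (by positivity : (0 : ℝ) < L ^ 2), div_self hL₂,
        one_pow, add_assoc]
      exact le_add_of_nonneg_right (by positivity)
  linarith [le_mul_of_one_le_right hC₀ this]

end Barrier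

theorem stmt0_general (d : ℕ) (lam Lam C₀ : ℝ) (hlam : 0 < lam) (hll : lam ≤ Lam)
    (hC₀ : 0 < C₀) :
    ∃ C : ℝ, 0 < C ∧
      ∀ c₀ L R : ℝ, 0 < c₀ → c₀ < C₀ → 0 < R → R < L →
      ∀ ν : Spc d, ‖ν‖ = 1 →
      ∀ w : Spc d × ℝ → ℝ,
        UpperSemicontinuousOn w (closure (QL ν L)) →
        ViscSubsol (QL ν L) w (fun M _ _ => pucciPlus lam Lam M) →
        (∀ p ∈ bdryPnu ν ∩ closure (QL ν L), w p ≤ c₀) →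
        (∀ p ∈ closure (QL ν L), w p ≤ C₀) →
        ∀ p ∈ QL ν R, w p ≤ c₀ + C * R / L := by
  have hLam : 0 ≤ Lam := hlam.le.trans hll
  set B := (Lam * d + 1) / lam with hBdef
  have hB : 0 < B := by positivity
  have hBlam : Lam * (d - 1) + 1 ≤ lam * B := by
    rw [hBdef, mul_div_cancel₀ _ hlam.ne']
    linarith
  refine ⟨C₀ * (B + 3), by positivity, fun c₀ L R hc₀ _ hR hRL ν hν w hw hsub hbd hbdC p hp => ?_⟩
  have hL : 0 < L := hR.trans hRL
  have hle : ∀ q ∈ closure (QL ν L), w q ≤ barrier c₀ C₀ B L ν q :=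
    hsub.le_of_strictSupersolution isCompact_closure_QL hw (contDiff_barrier c₀ C₀ B L ν)
      (fun q hq => timeDeriv_sub_pucciPlus_barrier_pos hlam hLam hν hC₀ hB hBlam hL
        (neg_lt_of_abs_lt hq.2.2.2))
      (fun q hq => by
        by_cases hs : dotR q.1 ν = 0
        · exact (hbd q ⟨hs, hq.1⟩).trans
            (self_le_barrier_of_mem_closure_QL hν hC₀.le hB.le hL hq.1)
        · linarith [hbdC q hq.1,
            add_le_barrier_of_mem_closure_QL_diff (c₀ := c₀) hν hC₀.le hB.le hL hq hs])
  exact (hle p (subset_closure (QL_mono hRL.le hR.le hp))).trans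
    (barrier_le_of_mem_QL hν hC₀.le hB.le hR hRL.le hp)

/-- Lemma 3.1: localization lemma for the Pucci maximal operator on the
box `Q_L`.  The constant `C` depends only on `λ, Λ, d, C₀`. -/
theorem stmt0 (d : ℕ) (hd : 1 ≤ d) (lam Lam C₀ : ℝ) (hlam : 0 < lam) (hll : lam ≤ Lam)
    (hC₀ : 0 < C₀) :
    ∃ C : ℝ, 0 < C ∧
      ∀ c₀ L R : ℝ, 0 < c₀ → c₀ < C₀ → 0 < R → R < L →
      ∀ ν : Spc d, ‖ν‖ = 1 →
      ∀ w : Spc d × ℝ → ℝ,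
        UpperSemicontinuousOn w (closure (QL ν L)) →
        ViscSubsol (QL ν L) w (fun M _ _ => pucciPlus lam Lam M) →
        (∀ p ∈ bdryPnu ν ∩ closure (QL ν L), w p ≤ c₀) →
        (∀ p ∈ closure (QL ν L), w p ≤ C₀) →
        ∀ p ∈ QL ν R, w p ≤ c₀ + C * R / L :=
  stmt0_general d lam Lam C₀ hlam hll hC₀
end

section
/- Let d ≥ 1, 0 < λ ≤ Λ, C₀ > c₀ > 0 and L > R > 0, and set Q_L^b = {(x,t) ∈ ℝ^d × ℝ : |x| < L, 0 < t < L²}. Suppose w is upper semicontinuous on closure(Q_L^b) and is a viscosity subsolution of ∂_t w − P⁺(D²w) = 0 in Q_L^b, with w(x,0) ≤ c₀ for all |x| ≤ L and w ≤ C₀ on closure(Q_L^b). Then there exists a constant C depending only on C₀, d and Λ such that w(x,t) ≤ c₀ + C·R²/L² for all (x,t) ∈ closure(Q_R^b). -/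
open Set Filter Topology
open scoped Classical

/-- The bottom box `Q_L^b = {|x| < L, 0 < t < L²}`. -/
def QLb {d : ℕ} (L : ℝ) : Set (Spc d × ℝ) := {p | ‖p.1‖ < L ∧ 0 < p.2 ∧ p.2 < L ^ 2}

/-! The paraboloid `ψ(x,t) = c₀ + (C₀/L²)(|x|² + (2dΛ+1)t)` has constant Hessian `(2C₀/L²)·I`,
so `∂ₜψ - P⁺(D²ψ) = C₀/L² > 0`: it is a strict classical supersolution. Hence the upper
semicontinuous function `w - ψ` cannot attain its maximum over the compact closure of `Q_L^b` at
an interior point, where `ψ` would be an admissible test function. On the rest of the closure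
`w ≤ ψ`: at `t = 0` because `w ≤ c₀ ≤ ψ`, on `|x| = L` and on `t = L²` because `w ≤ C₀ ≤ ψ`.
Thus `w ≤ ψ` everywhere, and `ψ ≤ c₀ + C₀(2dΛ+2)R²/L²` on the closure of `Q_R^b`. -/

lemma Matrix.IsHermitian.eigenvalues_smul_one {d : ℕ} {c : ℝ} (h : (c • 1 : Mat d).IsHermitian)
    (i : Fin d) : h.eigenvalues i = c := by
  have : Nonempty (Fin d) := ⟨i⟩
  have hσ : spectrum ℝ (c • 1 : Mat d) = {c} := by
    rw [← Algebra.algebraMap_eq_smul_one, spectrum.scalar_eq]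
  simpa [hσ] using h.eigenvalues_mem_spectrum_real i

lemma pucciPlus_smul_one (lam Lam : ℝ) {d : ℕ} {c : ℝ} (hc : 0 ≤ c) :
    pucciPlus lam Lam (c • 1 : Mat d) = d * Lam * c := by
  have h : (c • 1 : Mat d).IsHermitian := by simp [Matrix.IsHermitian]
  simp [pucciPlus, h.eigenvalues_smul_one, hc]
  ring

noncomputable def paraboloid {d : ℕ} (a b c : ℝ) (p : Spc d × ℝ) : ℝ :=
  c + a * ‖p.1‖ ^ 2 + b * p.2

section Paraboloid

variable {d : ℕ}

lemma contDiff_paraboloid (a b c : ℝ) : ContDiff ℝ 2 (paraboloid (d := d) a b c) := by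
  have hsq : ContDiff ℝ 2 fun p : Spc d × ℝ => ‖p.1‖ ^ 2 := (contDiff_norm_sq ℝ).comp contDiff_fst
  exact (contDiff_const.add (contDiff_const.mul hsq)).add (contDiff_const.mul contDiff_snd)

lemma timeDeriv_paraboloid (a b c : ℝ) (p : Spc d × ℝ) : timeDeriv (paraboloid a b c) p = b := by
  simp [timeDeriv, paraboloid]

lemma hasFDerivAt_paraboloid_space (a b c : ℝ) (t : ℝ) (y : Spc d) :
    HasFDerivAt (fun z => paraboloid a b c (z, t)) (a • 2 • innerSL ℝ y) y :=
  (((hasStrictFDerivAt_norm_sq y).hasFDerivAt.const_mul a).const_add c).add_const (b * t)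

lemma spaceHess_paraboloid (a b c : ℝ) (p : Spc d × ℝ) :
    spaceHess (paraboloid a b c) p = (2 * a) • (1 : Mat d) := by
  ext i j
  have hgrad : (fun y => fderiv ℝ (fun z => paraboloid a b c (z, p.2)) y
      (EuclideanSpace.single j 1)) = fun y => 2 * a * y j := by
    ext y
    simp [(hasFDerivAt_paraboloid_space a b c p.2 y).fderiv, EuclideanSpace.inner_single_right]
    ring
  have hlin : HasFDerivAt (fun y : Spc d => 2 * a * y j)
      ((2 * a) • (EuclideanSpace.proj j : Spc d →L[ℝ] ℝ)) p.1 :=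
    (EuclideanSpace.proj j : Spc d →L[ℝ] ℝ).hasFDerivAt.const_mul (2 * a)
  simp only [spaceHess, Matrix.of_apply, hgrad, hlin.fderiv]
  simp [Matrix.one_apply, eq_comm]

lemma timeDeriv_sub_pucciPlus_paraboloid (lam Lam : ℝ) {a : ℝ} (ha : 0 ≤ a) (b c : ℝ)
    (p : Spc d × ℝ) :
    timeDeriv (paraboloid a b c) p - pucciPlus lam Lam (spaceHess (paraboloid a b c) p)
      = b - 2 * d * Lam * a := by
  rw [timeDeriv_paraboloid, spaceHess_paraboloid, pucciPlus_smul_one lam Lam (by positivity)]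
  ring

end Paraboloid

lemma ViscSubsol.le_of_strict_supersolution {d : ℕ} {O : Set (Spc d × ℝ)}
    {w φ : Spc d × ℝ → ℝ} {H : Mat d → Spc d → Spc d × ℝ → ℝ} (hO : IsCompact (closure O))
    (hw : UpperSemicontinuousOn w (closure O)) (hsub : ViscSubsol O w H) (hφ : ContDiff ℝ 2 φ)
    (hstrict : ∀ p ∈ O, 0 < timeDeriv φ p - H (spaceHess φ p) (spaceGrad φ p) p)
    (hbdry : ∀ p ∈ closure O \ O, w p ≤ φ p) :
    ∀ p ∈ closure O, w p ≤ φ p := by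
  intro p hp
  have husc : UpperSemicontinuousOn (fun q => w q - φ q) (closure O) := by
    simpa [sub_eq_add_neg] using
      hw.add (hφ.continuous.neg.upperSemicontinuous.upperSemicontinuousOn _)
  obtain ⟨p₀, hp₀, hmax⟩ := husc.exists_isMaxOn ⟨p, hp⟩ hO
  have hmax_at : w p - φ p ≤ w p₀ - φ p₀ := hmax hp
  by_cases hp₀O : p₀ ∈ O
  · have := hsub φ p₀ hp₀O hφ.contDiffAt (hmax.on_subset subset_closure).localize
    linarith [hstrict p₀ hp₀O]
  · linarith [hbdry p₀ ⟨hp₀, hp₀O⟩]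

section BottomBox

variable {d : ℕ} {L : ℝ}

lemma closure_QLb (hL : 0 < L) :
    closure (QLb L : Set (Spc d × ℝ)) = Metric.closedBall 0 L ×ˢ Icc 0 (L ^ 2) := by
  have hQ : (QLb L : Set (Spc d × ℝ)) = Metric.ball 0 L ×ˢ Ioo 0 (L ^ 2) := by
    ext q
    simp [QLb]
  rw [hQ, closure_prod_eq, closure_ball _ hL.ne', closure_Ioo (by positivity)]

lemma isCompact_closure_QLb (hL : 0 < L) : IsCompact (closure (QLb L : Set (Spc d × ℝ))) := by
  rw [closure_QLb hL]
  exact (isCompact_closedBall _ _).prod isCompact_Icc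

lemma QLb_mono {R : ℝ} (hR : 0 < R) (hRL : R ≤ L) : (QLb R : Set (Spc d × ℝ)) ⊆ QLb L :=
  fun _ ⟨hx, ht₀, ht⟩ => ⟨hx.trans_le hRL, ht₀, ht.trans_le (by gcongr)⟩

lemma paraboloid_le_of_mem_closure_QLb {a b c : ℝ} (ha : 0 ≤ a) (hb : 0 ≤ b) (hL : 0 < L)
    {p : Spc d × ℝ} (hp : p ∈ closure (QLb L)) : paraboloid a b c p ≤ c + (a + b) * L ^ 2 := by
  rw [closure_QLb hL] at hp
  obtain ⟨hx, -, ht⟩ := hp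
  have hx2 : ‖p.1‖ ^ 2 ≤ L ^ 2 := by gcongr; simpa using hx
  unfold paraboloid
  nlinarith

lemma le_paraboloid_of_mem_closure_diff_QLb {w : Spc d × ℝ → ℝ} {a b c₀ C₀ : ℝ} (hL : 0 < L)
    (ha : 0 ≤ a) (hb : 0 ≤ b) (haL : C₀ ≤ a * L ^ 2) (hbL : C₀ ≤ b * L ^ 2) (hc₀ : 0 ≤ c₀)
    (hbot : ∀ x : Spc d, ‖x‖ ≤ L → w (x, 0) ≤ c₀) (hbd : ∀ p ∈ closure (QLb L), w p ≤ C₀) :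
    ∀ p ∈ closure (QLb L) \ QLb L, w p ≤ paraboloid a b c₀ p := by
  rintro ⟨x, t⟩ ⟨hp, hpQ⟩
  have hwC₀ := hbd _ hp
  rw [closure_QLb hL] at hp
  obtain ⟨hx, ht₀, htL⟩ := hp
  have hxL : ‖x‖ ≤ L := by simpa using hx
  simp only [QLb, mem_ofPred_eq, not_and_or, not_lt] at hpQ
  unfold paraboloid
  rcases ht₀.eq_or_lt with rfl | ht₀
  · nlinarith [hbot x hxL]
  · rcases hpQ with hxL' | ht₀' | htL'
    · have : ‖x‖ = L := le_antisymm hxL hxL'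
      subst this
      nlinarith
    · linarith
    · nlinarith

end BottomBox

theorem stmt12_general (d : ℕ) (Lam C₀ : ℝ) (hC₀ : 0 < C₀) :
    ∃ C : ℝ, 0 < C ∧
      ∀ lam : ℝ, 0 < lam → lam ≤ Lam →
      ∀ c₀ L R : ℝ, 0 < c₀ → c₀ < C₀ → 0 < R → R < L →
      ∀ w : Spc d × ℝ → ℝ,
        UpperSemicontinuousOn w (closure (QLb L : Set (Spc d × ℝ))) →
        ViscSubsol (QLb L) w (fun M _ _ => pucciPlus lam Lam M) →
        (∀ x : Spc d, ‖x‖ ≤ L → w (x, 0) ≤ c₀) →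
        (∀ p ∈ closure (QLb L : Set (Spc d × ℝ)), w p ≤ C₀) →
        ∀ p ∈ closure (QLb R : Set (Spc d × ℝ)), w p ≤ c₀ + C * R ^ 2 / L ^ 2 := by
  refine ⟨C₀ * (2 * d * |Lam| + 2), by positivity, ?_⟩
  intro lam hlam hlamLam c₀ L R hc₀ _ hR hRL w husc hsub hbot hbd p hp
  have hLam : 0 < Lam := hlam.trans_le hlamLam
  have hL : 0 < L := hR.trans hRL
  set a := C₀ / L ^ 2 with ha_def
  have ha : 0 < a := by positivity
  have haL : a * L ^ 2 = C₀ := by rw [ha_def]; field_simp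
  set b := (2 * d * Lam + 1) * a
  have hb : 0 ≤ b := by positivity
  have hwψ : ∀ q ∈ closure (QLb L), w q ≤ paraboloid a b c₀ q := by
    refine hsub.le_of_strict_supersolution (isCompact_closure_QLb hL) husc
      (contDiff_paraboloid a b c₀) (fun q _ => ?_)
      (le_paraboloid_of_mem_closure_diff_QLb hL ha.le hb haL.ge ?_ hc₀.le hbot hbd)
    · rw [timeDeriv_sub_pucciPlus_paraboloid lam Lam ha.le]
      linarith
    · nlinarith [mul_nonneg (mul_nonneg (Nat.cast_nonneg (α := ℝ) d) hLam.le) hC₀.le]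
  calc w p ≤ paraboloid a b c₀ p := hwψ p (closure_mono (QLb_mono hR hRL.le) hp)
    _ ≤ c₀ + (a + b) * R ^ 2 := paraboloid_le_of_mem_closure_QLb ha.le hb hR hp
    _ = c₀ + C₀ * (2 * d * |Lam| + 2) * R ^ 2 / L ^ 2 := by
      simp only [b, ha_def, abs_of_pos hLam]
      field_simp
      ring

/-- Lemma 6.1: localization lemma near the bottom boundary; the constant
`C` depends only on `C₀, d, Λ`. -/
theorem stmt12 (d : ℕ) (hd : 1 ≤ d) (Lam C₀ : ℝ) (hC₀ : 0 < C₀) :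
    ∃ C : ℝ, 0 < C ∧
      ∀ lam : ℝ, 0 < lam → lam ≤ Lam →
      ∀ c₀ L R : ℝ, 0 < c₀ → c₀ < C₀ → 0 < R → R < L →
      ∀ w : Spc d × ℝ → ℝ,
        UpperSemicontinuousOn w (closure (QLb L : Set (Spc d × ℝ))) →
        ViscSubsol (QLb L) w (fun M _ _ => pucciPlus lam Lam M) →
        (∀ x : Spc d, ‖x‖ ≤ L → w (x, 0) ≤ c₀) →
        (∀ p ∈ closure (QLb L : Set (Spc d × ℝ)), w p ≤ C₀) →
        ∀ p ∈ closure (QLb R : Set (Spc d × ℝ)), w p ≤ c₀ + C * R ^ 2 / L ^ 2 :=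
  stmt12_general d Lam C₀ hC₀
end
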